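/- Let Λ be a row-finite strongly aperiodic k-graph with no sources. For every maximal tail χ of Λ there exists an infinite path x ∈ Λ^∞ with β(x) = χ, where β(x) = {v ∈ Λ^0 : vΛx(n,n) ≠ ∅ for some n ∈ ℕ^k}; that is, the map β : Λ^∞ → χ_Λ is surjective. -/

import Mathlib

set_option autoImplicit false

open scoped Classical

/-- A `k`-graph: a countable small category together with a degree functor
`d : Λ → ℕ^k` satisfying the unique factorization property.  Paths (morphisms)
form a single type; vertices (objects) are identified with the paths of
degree `0`. -/
structure KGraph (k : ℕ) where
  /-- the type of paths (morphisms) of the `k`-graph -/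
  Path : Type
  countable : Countable Path
  nonempty : Nonempty Path
  /-- the range (codomain) vertex of a path -/
  r : Path → Path
  /-- the source (domain) vertex of a path -/
  s : Path → Path
  /-- composition: `comp lam mu` is the path `λμ`, meaningful when `s lam = r mu` -/
  comp : Path → Path → Path
  /-- the degree functor -/
  d : Path → Fin k → ℕ
  d_r : ∀ lam, d (r lam) = 0
  d_s : ∀ lam, d (s lam) = 0
  r_r : ∀ lam, r (r lam) = r lam
  s_r : ∀ lam, s (r lam) = r lam
  r_s : ∀ lam, r (s lam) = s lam
  s_s : ∀ lam, s (s lam) = s lam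
  id_comp : ∀ lam, comp (r lam) lam = lam
  comp_id : ∀ lam, comp lam (s lam) = lam
  r_comp : ∀ lam mu, s lam = r mu → r (comp lam mu) = r lam
  s_comp : ∀ lam mu, s lam = r mu → s (comp lam mu) = s mu
  d_comp : ∀ lam mu, s lam = r mu → d (comp lam mu) = d lam + d mu
  comp_assoc : ∀ lam mu nu, s lam = r mu → s mu = r nu →
    comp (comp lam mu) nu = comp lam (comp mu nu)
  /-- the unique factorization property -/
  factor : ∀ lam (m n : Fin k → ℕ), d lam = m + n →
    ∃! p : Path × Path, s p.1 = r p.2 ∧ comp p.1 p.2 = lam ∧ d p.1 = m ∧ d p.2 = n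

namespace KGraph

variable {k : ℕ}

/-- `v` is a vertex, i.e. an element of `Λ⁰`. -/
def IsVertex (Λ : KGraph k) (v : Λ.Path) : Prop := Λ.d v = 0

/-- `v ≤ w`, i.e. `vΛw ≠ ∅`. -/
def Conn (Λ : KGraph k) (v w : Λ.Path) : Prop := ∃ lam, Λ.r lam = v ∧ Λ.s lam = w

/-- the canonical generator `e i` of `ℕ^k`. -/
def eVec (k : ℕ) (i : Fin k) : Fin k → ℕ := Pi.single i 1

/-- `Λ` is row-finite: `vΛⁿ` is finite for every vertex `v` and `n ∈ ℕ^k`. -/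
def RowFinite (Λ : KGraph k) : Prop :=
  ∀ v, Λ.IsVertex v → ∀ n : Fin k → ℕ, {lam | Λ.r lam = v ∧ Λ.d lam = n}.Finite

/-- `Λ` has no sources: `vΛ^{e i} ≠ ∅` for every vertex `v` and `i`. -/
def NoSources (Λ : KGraph k) : Prop :=
  ∀ v, Λ.IsVertex v → ∀ i : Fin k, ∃ lam, Λ.r lam = v ∧ Λ.d lam = eVec k i

/-- the middle factor `λ(m,n)`: the unique `σ` such that `λ = μστ` with
`d μ = m`, `d σ = n - m`, `d τ = d λ - n` (junk value if no factorization exists). -/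
noncomputable def seg (Λ : KGraph k) (lam : Λ.Path) (m n : Fin k → ℕ) : Λ.Path :=
  if h : ∃ sig, ∃ mu tau, Λ.s mu = Λ.r sig ∧ Λ.s sig = Λ.r tau ∧
      Λ.comp (Λ.comp mu sig) tau = lam ∧ Λ.d mu = m ∧ Λ.d sig = n - m ∧
      Λ.d tau = Λ.d lam - n
  then h.choose else lam

/-- `Λ` has no local periodicity at the vertex `v`. -/
def NoLocalPeriodicity (Λ : KGraph k) (v : Λ.Path) : Prop :=
  ∀ m n : Fin k → ℕ, m ≠ n →
    ∃ lam, Λ.r lam = v ∧ m ⊔ n ≤ Λ.d lam ∧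
      Λ.seg lam m (m + Λ.d lam - (m ⊔ n)) ≠ Λ.seg lam n (n + Λ.d lam - (m ⊔ n))

/-- `Λ` is aperiodic: no vertex has local periodicity. -/
def Aperiodic (Λ : KGraph k) : Prop := ∀ v, Λ.IsVertex v → Λ.NoLocalPeriodicity v

/-- a hereditary set of vertices -/
def Hereditary (Λ : KGraph k) (H : Set Λ.Path) : Prop :=
  ∀ v ∈ H, ∀ w, Λ.Conn v w → w ∈ H

/-- a saturated set of vertices -/
def Saturated (Λ : KGraph k) (H : Set Λ.Path) : Prop :=
  ∀ v, Λ.IsVertex v → (∃ mu, Λ.r mu = v) →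
    (∃ i : Fin k, ∀ lam, Λ.r lam = v → Λ.d lam = eVec k i → Λ.s lam ∈ H) → v ∈ H

/-- the saturation of a set of vertices: the smallest saturated set containing it -/
def saturation (Λ : KGraph k) (H : Set Λ.Path) : Set Λ.Path :=
  ⋂₀ {K : Set Λ.Path | H ⊆ K ∧ Λ.Saturated K}

/-- no local periodicity at the vertex `v` of the quotient graph `Γ(Λ \ H)`
(whose paths are the paths of `Λ` with source outside `H`). -/
def QuotNoLocalPeriodicity (Λ : KGraph k) (H : Set Λ.Path) (v : Λ.Path) : Prop :=
  ∀ m n : Fin k → ℕ, m ≠ n →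
    ∃ lam, Λ.r lam = v ∧ Λ.s lam ∉ H ∧ m ⊔ n ≤ Λ.d lam ∧
      Λ.seg lam m (m + Λ.d lam - (m ⊔ n)) ≠ Λ.seg lam n (n + Λ.d lam - (m ⊔ n))

/-- `Λ` is strongly aperiodic: `Γ(Λ \ H)` is aperiodic for every saturated
hereditary proper subset `H ⊊ Λ⁰`. -/
def StronglyAperiodic (Λ : KGraph k) : Prop :=
  ∀ H : Set Λ.Path, (∀ v ∈ H, Λ.IsVertex v) → Λ.Hereditary H → Λ.Saturated H →
    H ≠ {v | Λ.IsVertex v} →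
    ∀ v, Λ.IsVertex v → v ∉ H → Λ.QuotNoLocalPeriodicity H v

/-- a maximal tail -/
def MaximalTail (Λ : KGraph k) (γ : Set Λ.Path) : Prop :=
  γ.Nonempty ∧ (∀ v ∈ γ, Λ.IsVertex v) ∧
  (∀ v₁ ∈ γ, ∀ v₂ ∈ γ, ∃ w ∈ γ, Λ.Conn v₁ w ∧ Λ.Conn v₂ w) ∧
  (∀ v ∈ γ, ∀ i : Fin k, ∃ f, Λ.r f = v ∧ Λ.d f = eVec k i ∧ Λ.s f ∈ γ) ∧
  (∀ v, Λ.IsVertex v → ∀ w ∈ γ, Λ.Conn v w → v ∈ γ)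

end KGraph

namespace KGraph

variable {k : ℕ}

/-- An infinite path in `Λ`: a degree-preserving functor `x : Ω_k → Λ`,
recorded by its values `x(m,n)` for `m ≤ n` in `ℕ^k`. -/
structure InfinitePath (Λ : KGraph k) where
  toFun : (Fin k → ℕ) → (Fin k → ℕ) → Λ.Path
  d_eq : ∀ m n : Fin k → ℕ, m ≤ n → Λ.d (toFun m n) = n - m
  r_eq : ∀ m n : Fin k → ℕ, m ≤ n → Λ.r (toFun m n) = toFun m m
  s_eq : ∀ m n : Fin k → ℕ, m ≤ n → Λ.s (toFun m n) = toFun n n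
  comp_eq : ∀ m n p : Fin k → ℕ, m ≤ n → n ≤ p →
    Λ.comp (toFun m n) (toFun n p) = toFun m p

/-- `β(x) = {v ∈ Λ⁰ : vΛx(n,n) ≠ ∅ for some n ∈ ℕ^k}`. -/
def tailOf (Λ : KGraph k) (x : Λ.InfinitePath) : Set Λ.Path :=
  {v | Λ.IsVertex v ∧ ∃ n : Fin k → ℕ, Λ.Conn v (x.toFun n n)}

/-- the cylinder set `Z(μ) = {x ∈ Λ^∞ : x(0, d(μ)) = μ}`. -/
def cyl (Λ : KGraph k) (mu : Λ.Path) : Set Λ.InfinitePath :=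
  {x | x.toFun 0 (Λ.d mu) = mu}

/-- the topology on `Λ^∞` generated by the cylinder sets -/
instance instTopInfinitePath (Λ : KGraph k) : TopologicalSpace Λ.InfinitePath :=
  TopologicalSpace.generateFrom {U | ∃ mu : Λ.Path, U = Λ.cyl mu}

/-- `χ_Λ`, the set of maximal tails of `Λ` -/
def MaxTail (Λ : KGraph k) : Type := {γ : Set Λ.Path // Λ.MaximalTail γ}

/-- `S(v) = {χ ∈ χ_Λ : v ∈ χ}`. -/
def Sv (Λ : KGraph k) (v : Λ.Path) : Set Λ.MaxTail := {χ | v ∈ χ.1}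

/-- the topology on `χ_Λ` generated by the sets `S(v)`, `v ∈ Λ⁰` -/
instance instTopMaxTail (Λ : KGraph k) : TopologicalSpace Λ.MaxTail :=
  TopologicalSpace.generateFrom {U | ∃ v, Λ.IsVertex v ∧ U = Λ.Sv v}

end KGraph

/-! Enumerate the maximal tail as `γ = {f 0, f 1, …}`. Since any two vertices of `γ` have a common
successor in `γ`, and every vertex of `γ` emits edges of every colour ending in `γ`, there are
paths `C 0 ⊑ C 1 ⊑ …` with sources in `γ` such that `C (j + 1)` extends `C j` by a path of degree
at least `(1, …, 1)` ending at a vertex reachable from `f j`. Their union is an infinite path `x`.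
Every vertex of `x` reaches `γ`, so `β(x) ⊆ γ` by hereditariness, and `f j` reaches the vertex of
`x` at `d (C (j + 1))`, so `γ ⊆ β(x)`. -/

namespace KGraph

variable {k : ℕ} {Λ : KGraph k}

lemma IsVertex.r_eq_and_s_eq {v : Λ.Path} (hv : Λ.IsVertex v) : Λ.r v = v ∧ Λ.s v = v := by
  have h : ((Λ.r v, v) : Λ.Path × Λ.Path) = (v, Λ.s v) :=
    (Λ.factor v 0 0 (by rw [add_zero]; exact hv)).unique
      ⟨Λ.s_r v, Λ.id_comp v, Λ.d_r v, hv⟩ ⟨(Λ.r_s v).symm, Λ.comp_id v, hv, Λ.d_s v⟩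
  exact ⟨congrArg Prod.fst h, (congrArg Prod.snd h).symm⟩

lemma Conn.trans {u v w : Λ.Path} (h₁ : Λ.Conn u v) (h₂ : Λ.Conn v w) : Λ.Conn u w := by
  obtain ⟨p, rfl, rfl⟩ := h₁
  obtain ⟨q, hq, rfl⟩ := h₂
  exact ⟨Λ.comp p q, Λ.r_comp p q hq.symm, Λ.s_comp p q hq.symm⟩

/-- The factorization `λ = λ₁λ₂` with `d λ₁ = m`; a junk value unless `m ≤ d λ`. -/
noncomputable def split (Λ : KGraph k) (lam : Λ.Path) (m : Fin k → ℕ) : Λ.Path × Λ.Path :=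
  if h : m ≤ Λ.d lam then
    (Λ.factor lam m (Λ.d lam - m) (add_tsub_cancel_of_le h).symm).exists.choose
  else (lam, lam)

lemma split_spec {lam : Λ.Path} {m : Fin k → ℕ} (h : m ≤ Λ.d lam) :
    Λ.s (Λ.split lam m).1 = Λ.r (Λ.split lam m).2 ∧
    Λ.comp (Λ.split lam m).1 (Λ.split lam m).2 = lam ∧
    Λ.d (Λ.split lam m).1 = m ∧ Λ.d (Λ.split lam m).2 = Λ.d lam - m := by
  rw [split, dif_pos h]
  exact (Λ.factor lam m (Λ.d lam - m) (add_tsub_cancel_of_le h).symm).exists.choose_spec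

lemma split_eq {a b lam : Λ.Path} {m : Fin k → ℕ} (hab : Λ.s a = Λ.r b)
    (hc : Λ.comp a b = lam) (hda : Λ.d a = m) : Λ.split lam m = (a, b) := by
  subst hc hda
  have hd : Λ.d (Λ.comp a b) = Λ.d a + Λ.d b := Λ.d_comp a b hab
  have hle : Λ.d a ≤ Λ.d (Λ.comp a b) := hd ▸ le_self_add
  refine (Λ.factor _ _ _ (add_tsub_cancel_of_le hle).symm).unique (split_spec hle)
    ⟨hab, rfl, rfl, ?_⟩
  rw [hd, add_tsub_cancel_left]

/-- The paper's `λ(m, n)`, meaningful for `m ≤ n ≤ d λ`. -/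
noncomputable def segment (Λ : KGraph k) (lam : Λ.Path) (m n : Fin k → ℕ) : Λ.Path :=
  (Λ.split (Λ.split lam n).1 m).2

lemma split_split {lam : Λ.Path} {m n : Fin k → ℕ} (hm : m ≤ n) (hn : n ≤ Λ.d lam) :
    Λ.split lam m = ((Λ.split (Λ.split lam n).1 m).1,
      Λ.comp (Λ.segment lam m n) (Λ.split lam n).2) := by
  obtain ⟨hab, hc, hda, -⟩ := split_spec hn
  obtain ⟨hce, hc₂, hdc, -⟩ := split_spec (hm.trans_eq hda.symm)
  have hse : Λ.s (Λ.segment lam m n) = Λ.r (Λ.split lam n).2 := by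
    rw [segment, ← hab, ← Λ.s_comp _ _ hce, hc₂]
  refine split_eq (by rw [Λ.r_comp _ _ hse]; exact hce) ?_ hdc
  rw [segment, ← Λ.comp_assoc _ _ _ hce hse, hc₂, hc]

lemma d_segment {lam : Λ.Path} {m n : Fin k → ℕ} (hm : m ≤ n) (hn : n ≤ Λ.d lam) :
    Λ.d (Λ.segment lam m n) = n - m := by
  have hda := (split_spec hn).2.2.1
  rw [segment, (split_spec (hm.trans_eq hda.symm)).2.2.2, hda]

lemma segment_self {lam : Λ.Path} {n : Fin k → ℕ} (hn : n ≤ Λ.d lam) :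
    Λ.segment lam n n = Λ.s (Λ.split lam n).1 := by
  rw [segment, split_eq (Λ.r_s _).symm (Λ.comp_id _) (split_spec hn).2.2.1]

lemma segment_d_d {lam : Λ.Path} : Λ.segment lam (Λ.d lam) (Λ.d lam) = Λ.s lam := by
  rw [segment_self le_rfl, split_eq (Λ.r_s lam).symm (Λ.comp_id lam) rfl]

lemma r_segment {lam : Λ.Path} {m n : Fin k → ℕ} (hm : m ≤ n) (hn : n ≤ Λ.d lam) :
    Λ.r (Λ.segment lam m n) = Λ.segment lam m m := by
  have hm' := hm.trans_eq (split_spec hn).2.2.1.symm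
  rw [segment, ← (split_spec hm').1, segment_self (hm.trans hn), split_split hm hn]

lemma s_segment {lam : Λ.Path} {m n : Fin k → ℕ} (hm : m ≤ n) (hn : n ≤ Λ.d lam) :
    Λ.s (Λ.segment lam m n) = Λ.segment lam n n := by
  obtain ⟨hce, hc₂, -, -⟩ := split_spec (hm.trans_eq (split_spec hn).2.2.1.symm)
  rw [segment, segment_self hn, ← Λ.s_comp _ _ hce, hc₂]

lemma comp_segment {lam : Λ.Path} {m n p : Fin k → ℕ} (hm : m ≤ n) (hn : n ≤ p)
    (hp : p ≤ Λ.d lam) :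
    Λ.comp (Λ.segment lam m n) (Λ.segment lam n p) = Λ.segment lam m p := by
  have hn' : n ≤ Λ.d (Λ.split lam p).1 := hn.trans_eq (split_spec hp).2.2.1.symm
  have hpre : (Λ.split (Λ.split lam p).1 n).1 = (Λ.split lam n).1 :=
    (congrArg Prod.fst (split_split hn hp)).symm
  have hseg : Λ.segment (Λ.split lam p).1 m n = Λ.segment lam m n := by
    rw [segment, segment, hpre]
  have h := congrArg Prod.snd (split_split hm hn')
  rw [hseg] at h
  exact h.symm

lemma conn_segment_s {lam : Λ.Path} {n : Fin k → ℕ} (hn : n ≤ Λ.d lam) :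
    Λ.Conn (Λ.segment lam n n) (Λ.s lam) := by
  obtain ⟨hab, hc, -, -⟩ := split_spec hn
  exact ⟨(Λ.split lam n).2, by rw [segment_self hn, hab], by rw [← Λ.s_comp _ _ hab, hc]⟩

def IsPrefix (Λ : KGraph k) (μ lam : Λ.Path) : Prop :=
  ∃ ν, Λ.s μ = Λ.r ν ∧ Λ.comp μ ν = lam

lemma IsPrefix.refl (μ : Λ.Path) : Λ.IsPrefix μ μ :=
  ⟨Λ.s μ, (Λ.r_s μ).symm, Λ.comp_id μ⟩

lemma IsPrefix.trans {μ lam ρ : Λ.Path} (h₁ : Λ.IsPrefix μ lam) (h₂ : Λ.IsPrefix lam ρ) :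
    Λ.IsPrefix μ ρ := by
  obtain ⟨ν, hν, rfl⟩ := h₁
  obtain ⟨τ, hτ, rfl⟩ := h₂
  rw [Λ.s_comp _ _ hν] at hτ
  exact ⟨Λ.comp ν τ, by rw [Λ.r_comp _ _ hτ, hν], (Λ.comp_assoc _ _ _ hν hτ).symm⟩

lemma IsPrefix.segment_eq {μ lam : Λ.Path} (h : Λ.IsPrefix μ lam) (m : Fin k → ℕ)
    {n : Fin k → ℕ} (hn : n ≤ Λ.d μ) : Λ.segment lam m n = Λ.segment μ m n := by
  obtain ⟨ν, hν, rfl⟩ := h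
  have hle : Λ.d μ ≤ Λ.d (Λ.comp μ ν) := by rw [Λ.d_comp _ _ hν]; exact le_self_add
  have hpre : (Λ.split (Λ.comp μ ν) n).1 = (Λ.split μ n).1 := by
    simpa [split_eq hν rfl rfl] using (congrArg Prod.fst (split_split hn hle))
  rw [segment, segment, hpre]

lemma isPrefix_of_le {C : ℕ → Λ.Path} (hC : ∀ j, Λ.IsPrefix (C j) (C (j + 1))) {i j : ℕ}
    (h : i ≤ j) : Λ.IsPrefix (C i) (C j) := by
  induction h with
  | refl => exact .refl _
  | step _ ih => exact ih.trans (hC _)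

theorem exists_infinitePath_of_chain {C : ℕ → Λ.Path} (hC : ∀ j, Λ.IsPrefix (C j) (C (j + 1)))
    (hcof : ∀ n, ∃ j, n ≤ Λ.d (C j)) :
    ∃ x : Λ.InfinitePath, ∀ j m n, n ≤ Λ.d (C j) → x.toFun m n = Λ.segment (C j) m n := by
  choose J hJ using hcof
  have agree : ∀ a b m n, n ≤ Λ.d (C a) → n ≤ Λ.d (C b) →
      Λ.segment (C a) m n = Λ.segment (C b) m n := fun a b m n ha hb => by
    rw [← (isPrefix_of_le hC (le_max_left a b)).segment_eq m ha,
      (isPrefix_of_le hC (le_max_right a b)).segment_eq m hb]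
  let x : Λ.InfinitePath :=
    { toFun := fun m n => Λ.segment (C (J n)) m n
      d_eq := fun m n h => d_segment h (hJ n)
      r_eq := fun m n h => by
        rw [r_segment h (hJ n), agree (J n) (J m) m m (h.trans (hJ n)) (hJ m)]
      s_eq := fun m n h => s_segment h (hJ n)
      comp_eq := fun m n p h₁ h₂ => by
        rw [agree (J n) (J p) m n (hJ n) (h₂.trans (hJ p)), comp_segment h₁ h₂ (hJ p)] }
  exact ⟨x, fun j m n hn => agree _ _ _ _ (hJ n) hn⟩

lemma exists_chain (P : Set Λ.Path) (p₀ : Λ.Path) (hp₀ : Λ.s p₀ ∈ P)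
    (Q : ℕ → Λ.Path → Prop) (hstep : ∀ j, ∀ v ∈ P, ∃ q, Λ.r q = v ∧ Λ.s q ∈ P ∧ Q j q) :
    ∃ C : ℕ → Λ.Path, ∀ j, Λ.s (C j) ∈ P ∧
      ∃ q, Λ.s (C j) = Λ.r q ∧ Λ.comp (C j) q = C (j + 1) ∧ Q j q := by
  choose g hg using hstep
  let C : ℕ → {p // Λ.s p ∈ P} := fun j => Nat.rec ⟨p₀, hp₀⟩
    (fun j c => ⟨Λ.comp c.1 (g j _ c.2), by
      rw [Λ.s_comp _ _ (hg j _ c.2).1.symm]; exact (hg j _ c.2).2.1⟩) j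
  exact ⟨fun j => (C j).1, fun j =>
    ⟨(C j).2, g j _ (C j).2, (hg j _ (C j).2).1.symm, rfl, (hg j _ (C j).2).2.2⟩⟩

variable {γ : Set Λ.Path}

lemma MaximalTail.exists_path_d_eq_sum (hγ : Λ.MaximalTail γ) (t : Finset (Fin k))
    {v : Λ.Path} (hv : v ∈ γ) : ∃ ν, Λ.r ν = v ∧ Λ.d ν = ∑ i ∈ t, eVec k i ∧ Λ.s ν ∈ γ := by
  induction t using Finset.induction_on with
  | empty =>
    obtain ⟨hr, hs⟩ := (hγ.2.1 v hv).r_eq_and_s_eq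
    exact ⟨v, hr, hγ.2.1 v hv, by rwa [hs]⟩
  | insert i t hi ih =>
    obtain ⟨ν, hr, hd, hs⟩ := ih
    obtain ⟨e, he, hde, hse⟩ := hγ.2.2.2.1 _ hs i
    refine ⟨Λ.comp ν e, by rw [Λ.r_comp _ _ he.symm, hr], ?_, by rwa [Λ.s_comp _ _ he.symm]⟩
    rw [Λ.d_comp _ _ he.symm, Finset.sum_insert hi, hd, hde, add_comm]

lemma MaximalTail.exists_step (hγ : Λ.MaximalTail γ) {v t : Λ.Path} (hv : v ∈ γ)
    (ht : t ∈ γ) : ∃ q, Λ.r q = v ∧ Λ.s q ∈ γ ∧ 1 ≤ Λ.d q ∧ Λ.Conn t (Λ.s q) := by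
  obtain ⟨w, hw, ⟨μ, hμr, hμs⟩, htw⟩ := hγ.2.2.1 v hv t ht
  obtain ⟨ν, hνr, hνd, hνs⟩ := hγ.exists_path_d_eq_sum Finset.univ hw
  have hμν : Λ.s μ = Λ.r ν := hμs.trans hνr.symm
  refine ⟨Λ.comp μ ν, by rw [Λ.r_comp _ _ hμν, hμr], by rwa [Λ.s_comp _ _ hμν], ?_, ?_⟩
  · rw [Λ.d_comp _ _ hμν, hνd]
    intro i
    simp [eVec]
  · rw [Λ.s_comp _ _ hμν]
    exact htw.trans ⟨ν, hνr, rfl⟩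

lemma MaximalTail.tailOf_subset (hγ : Λ.MaximalTail γ) {x : Λ.InfinitePath}
    (hx : ∀ n, ∃ w ∈ γ, Λ.Conn (x.toFun n n) w) : Λ.tailOf x ⊆ γ := by
  rintro v ⟨hv, n, hvn⟩
  obtain ⟨w, hw, hnw⟩ := hx n
  exact hγ.2.2.2.2 v hv w hw (hvn.trans hnw)

end KGraph

theorem stmt14_general {k : ℕ} (Λ : KGraph k) :
    ∀ γ : Set Λ.Path, Λ.MaximalTail γ → ∃ x : Λ.InfinitePath, Λ.tailOf x = γ := by
  intro γ hγ
  have := Λ.countable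
  obtain ⟨f, hf⟩ := γ.to_countable.exists_eq_range hγ.1
  obtain ⟨v₀, hv₀⟩ := hγ.1
  obtain ⟨C, hC⟩ := KGraph.exists_chain γ v₀ (by rwa [(hγ.2.1 v₀ hv₀).r_eq_and_s_eq.2])
    (fun j q => 1 ≤ Λ.d q ∧ Λ.Conn (f j) (Λ.s q))
    (fun j _ hv => hγ.exists_step hv (hf ▸ Set.mem_range_self j))
  choose hCγ q hqr hqC hqd hfq using hC
  have hdeg : ∀ j i, j ≤ Λ.d (C j) i := by
    intro j
    induction j with
    | zero => exact fun i => Nat.zero_le _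
    | succ j ih => intro i; rw [← hqC, Λ.d_comp _ _ (hqr j)]; exact add_le_add (ih i) (hqd j i)
  have hcof : ∀ n, ∃ j, n ≤ Λ.d (C j) := fun n =>
    ⟨Finset.univ.sup n, fun i => (Finset.le_sup (Finset.mem_univ i)).trans (hdeg _ i)⟩
  obtain ⟨x, hx⟩ := KGraph.exists_infinitePath_of_chain (fun j => ⟨q j, hqr j, hqC j⟩) hcof
  refine ⟨x, (hγ.tailOf_subset fun n => ?_).antisymm ?_⟩
  · obtain ⟨j, hj⟩ := hcof n
    exact ⟨_, hCγ j, hx j n n hj ▸ KGraph.conn_segment_s hj⟩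
  · intro v hv
    obtain ⟨j, rfl⟩ := hf ▸ hv
    refine ⟨hγ.2.1 _ hv, Λ.d (C (j + 1)), ?_⟩
    rw [hx (j + 1) _ _ le_rfl, KGraph.segment_d_d, ← hqC j, Λ.s_comp _ _ (hqr j)]
    exact hfq j

/-- `β : Λ^∞ → χ_Λ` is surjective: every maximal tail is `β(x)` for some
infinite path `x`. -/
theorem stmt14 {k : ℕ} (Λ : KGraph k) (hrf : Λ.RowFinite) (hns : Λ.NoSources)
    (hsa : Λ.StronglyAperiodic) :
    ∀ γ : Set Λ.Path, Λ.MaximalTail γ → ∃ x : Λ.InfinitePath, Λ.tailOf x = γ :=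
  stmt14_general Λ
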